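/- Let P^C be a representable pseudo-tensor structure on a DG category C. For composable surjections of finite sets K →π' J →π I (with J_i = π^{-1}(i), K_j = π'^{-1}(j), K_i = (ππ')^{-1}(i), and π'_i := π'|_{K_i}: K_i ↠ J_i), the diagram ε_π ∘ ε_{π'} = (⊗_{i∈I} ε_{π'_i}) ∘ ε_{ππ'} commutes as morphisms ⊗_{k∈K}X_k → ⊗_{i∈I}(⊗_{j∈J_i}(⊗_{k∈K_j}X_k)) in H^0C. -/

import Mathlib

/-! # Preamble: pseudo-tensor structures on DG categories

A DG category `C` together with a pseudo-tensor structure is formalized as a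
`PTData` (the data) satisfying `PTAxioms` (the axioms).  Following
Beilinson–Drinfeld, the Hom-complexes of the underlying DG category are the
complexes `P_1({X},Y)^*`, operations `P_I({X_i},Y)^*` are indexed by families
`Fin k → Obj` (`k = |I|`), and composition is along surjections of finite sets
`π : Fin p → Fin l`, the fibers `J_i = π⁻¹(i)` being enumerated monotonically
by `fiberEmb`. -/

universe u v

open Finset

/-- The fiber of `π : Fin p → Fin l` over `i` as a finite set. -/
def fiberSet {p l : ℕ} (π : Fin p → Fin l) (i : Fin l) : Finset (Fin p) :=
  Finset.univ.filter (fun j => π j = i)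

/-- The cardinality of the fiber of `π` over `i`. -/
def fiberCard {p l : ℕ} (π : Fin p → Fin l) (i : Fin l) : ℕ :=
  (fiberSet π i).card

/-- The monotone enumeration of the fiber of `π` over `i`. -/
def fiberEmb {p l : ℕ} (π : Fin p → Fin l) (i : Fin l)
    (a : Fin (fiberCard π i)) : Fin p :=
  ((fiberSet π i).orderIsoOfFin rfl a : Fin p)

lemma fiberEmb_mem {p l : ℕ} (π : Fin p → Fin l) (i : Fin l)
    (a : Fin (fiberCard π i)) : π (fiberEmb π i a) = i := by
  have h := ((fiberSet π i).orderIsoOfFin rfl a).2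
  unfold fiberSet at h
  rw [Finset.mem_filter] at h
  exact h.2

/-- For a composable pair `π ∘ π'`, the induced map between the fibers of
`π ∘ π'` over `i` and the fiber of `π` over `i`. -/
def fiberMap {l p q : ℕ} (π : Fin p → Fin l) (π' : Fin q → Fin p) (i : Fin l)
    (a : Fin (fiberCard (π ∘ π') i)) : Fin (fiberCard π i) :=
  ((fiberSet π i).orderIsoOfFin rfl).symm
    ⟨π' (fiberEmb (π ∘ π') i a), by
      simp only [fiberSet, Finset.mem_filter, Finset.mem_univ, true_and]
      exact fiberEmb_mem (π ∘ π') i a⟩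

lemma fiberMap_surjective {l p q : ℕ} (π : Fin p → Fin l) (π' : Fin q → Fin p)
    (hπ' : Function.Surjective π') (i : Fin l) :
    Function.Surjective (fiberMap π π' i) := by
  intro b
  obtain ⟨c, hc⟩ := hπ' (fiberEmb π i b)
  have hcmem : c ∈ fiberSet (π ∘ π') i := by
    simp only [fiberSet, Finset.mem_filter, Finset.mem_univ, true_and,
      Function.comp_apply, hc]
    exact fiberEmb_mem π i b
  refine ⟨((fiberSet (π ∘ π') i).orderIsoOfFin rfl).symm ⟨c, hcmem⟩, ?_⟩
  have h1 : fiberEmb (π ∘ π') i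
      (((fiberSet (π ∘ π') i).orderIsoOfFin rfl).symm ⟨c, hcmem⟩) = c := by
    simp [fiberEmb]
  have h2 : (⟨π' (fiberEmb (π ∘ π') i
        (((fiberSet (π ∘ π') i).orderIsoOfFin rfl).symm ⟨c, hcmem⟩)), by
      simp only [fiberSet, Finset.mem_filter, Finset.mem_univ, true_and]
      exact fiberEmb_mem (π ∘ π') i _⟩ :
      {x // x ∈ fiberSet π i}) = (fiberSet π i).orderIsoOfFin rfl b := by
    apply Subtype.ext
    show π' (fiberEmb (π ∘ π') i _) = _
    rw [h1, hc]
    rfl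
  unfold fiberMap
  have h3 := congrArg (((fiberSet π i).orderIsoOfFin rfl).symm) h2
  exact h3.trans (OrderIso.symm_apply_apply _ b)

/-- Summation over the fibers of `π` (via their monotone enumerations)
computes the total sum. -/
lemma sum_fiberEmb {p l : ℕ} {M : Type*} [AddCommMonoid M]
    (π : Fin p → Fin l) (v : Fin p → M) :
    (∑ i, ∑ b, v (fiberEmb π i b)) = ∑ j, v j := by
  have h1 : ∀ i, (∑ b, v (fiberEmb π i b)) = ∑ x ∈ fiberSet π i, v x := by
    intro i
    rw [← Finset.sum_coe_sort (fiberSet π i) v]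
    exact Equiv.sum_comp ((fiberSet π i).orderIsoOfFin rfl).toEquiv
      (fun x => v x.1)
  simp only [h1]
  simpa [fiberSet] using Finset.sum_fiberwise (Finset.univ : Finset (Fin p)) π v

lemma fiberSet_id {p : ℕ} (i : Fin p) : fiberSet (id : Fin p → Fin p) i = {i} := by
  ext x; simp [fiberSet]

lemma fiberCard_id {p : ℕ} (i : Fin p) : fiberCard (id : Fin p → Fin p) i = 1 := by
  rw [fiberCard, fiberSet_id]; simp

lemma fiberEmb_id {p : ℕ} (i : Fin p) (a : Fin (fiberCard (id : Fin p → Fin p) i)) :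
    fiberEmb (id : Fin p → Fin p) i a = i :=
  fiberEmb_mem (id : Fin p → Fin p) i a

lemma fiberSet_const {k : ℕ} (i : Fin 1) :
    fiberSet (fun _ : Fin k => (0 : Fin 1)) i = Finset.univ := by
  apply Finset.filter_true_of_mem
  intro x _
  exact Subsingleton.elim _ _

lemma fiberCard_const {k : ℕ} (i : Fin 1) :
    fiberCard (fun _ : Fin k => (0 : Fin 1)) i = k := by
  rw [fiberCard, fiberSet_const]; simp

lemma fiberEmb_const_val {k : ℕ} (i : Fin 1)
    (a : Fin (fiberCard (fun _ : Fin k => (0 : Fin 1)) i)) :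
    ((fiberEmb (fun _ : Fin k => (0 : Fin 1)) i a : Fin k) : ℕ) = (a : ℕ) := by
  have hcard : (fiberSet (fun _ : Fin k => (0 : Fin 1)) i).card
      = fiberCard (fun _ : Fin k => (0 : Fin 1)) i := rfl
  have hk : fiberCard (fun _ : Fin k => (0 : Fin 1)) i = k := fiberCard_const i
  have huniq := Finset.orderEmbOfFin_unique
    (s := fiberSet (fun _ : Fin k => (0 : Fin 1)) i) hcard
    (f := fun b => (⟨(b : ℕ), by omega⟩ : Fin k))
    (fun x => by rw [fiberSet_const]; exact Finset.mem_univ _)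
    (fun x y hxy => by simp only [Fin.mk_lt_mk]; exact hxy)
  unfold fiberEmb
  exact (congrArg Fin.val (congrFun huniq a)).symm

lemma fiberCard_bij {p l : ℕ} (π : Fin p → Fin l) (hπ : Function.Bijective π)
    (i : Fin l) : fiberCard π i = 1 := by
  rw [fiberCard, Finset.card_eq_one]
  refine ⟨(Equiv.ofBijective π hπ).symm i, ?_⟩
  ext x
  simp only [fiberSet, Finset.mem_filter, Finset.mem_univ, true_and,
    Finset.mem_singleton]
  constructor
  · intro hx
    have : π x = π ((Equiv.ofBijective π hπ).symm i) := by
      rw [hx]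
      exact ((Equiv.ofBijective π hπ).apply_symm_apply i).symm
    exact hπ.injective this
  · intro hx
    subst hx
    exact (Equiv.ofBijective π hπ).apply_symm_apply i

/-- The data of a pseudo-tensor structure on a DG category: a class of
objects, complexes of abelian groups `P k X Y •` for every finite family
`X : Fin k → Obj` and object `Y`, with differential `pd`, composition maps
`pcomp` along surjections of finite sets, and unit elements `one`.
The Hom complexes of the underlying DG category are `Hom X Y • = P 1 {X} Y •`. -/
structure PTData : Type (max (u + 1) (v + 1)) where
  Obj : Type u
  P : ∀ (k : ℕ), (Fin k → Obj) → Obj → ℤ → Type v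
  grp : ∀ k X Y n, AddCommGroup (P k X Y n)
  pd : ∀ {k : ℕ} {X : Fin k → Obj} {Y : Obj} {n : ℤ}, P k X Y n → P k X Y (n + 1)
  pcomp : ∀ {l p : ℕ} (π : Fin p → Fin l), Function.Surjective π →
      ∀ {X : Fin p → Obj} {Y : Fin l → Obj} {Z : Obj} {m : ℤ} {n : Fin l → ℤ},
        P l Y Z m → (∀ i, P (fiberCard π i) (X ∘ fiberEmb π i) (Y i) (n i)) →
        P p X Z (m + ∑ i, n i)
  one : ∀ (E : Obj), P 1 (fun _ => E) E 0

attribute [instance] PTData.grp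

namespace PTData

variable (C : PTData.{u, v})

/-- Transport along an equality of degrees. -/
def dcast {k : ℕ} {X : Fin k → C.Obj} {Y : C.Obj} {m m' : ℤ} (h : m = m')
    (f : C.P k X Y m) : C.P k X Y m' := h ▸ f

/-- Transport along an equality of target objects. -/
def ocast {k : ℕ} {X : Fin k → C.Obj} {Y Y' : C.Obj} (h : Y = Y') {m : ℤ}
    (f : C.P k X Y m) : C.P k X Y' m := h ▸ f

/-- Transport along an equality of index sets and families. -/
def pcast {k k' : ℕ} (h : k = k') {X : Fin k → C.Obj} {X' : Fin k' → C.Obj}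
    {Y : C.Obj} {m : ℤ} (f : C.P k X Y m)
    (hX : ∀ a, X a = X' (Fin.cast h a)) : C.P k' X' Y m := by
  subst h
  have hXX : X = X' := funext fun a =>
    (hX a).trans (congrArg X' (Fin.ext (by simp)))
  exact hXX ▸ f

@[simp] lemma dcast_rfl {k : ℕ} {X : Fin k → C.Obj} {Y : C.Obj} {m : ℤ}
    (f : C.P k X Y m) : C.dcast rfl f = f := rfl

lemma dcast_add {k : ℕ} {X : Fin k → C.Obj} {Y : C.Obj} {m m' : ℤ} (h : m = m')
    (f g : C.P k X Y m) : C.dcast h (f + g) = C.dcast h f + C.dcast h g := by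
  subst h; rfl

lemma dcast_zero {k : ℕ} {X : Fin k → C.Obj} {Y : C.Obj} {m m' : ℤ} (h : m = m') :
    C.dcast h (0 : C.P k X Y m) = 0 := by subst h; rfl

lemma dcast_smul {k : ℕ} {X : Fin k → C.Obj} {Y : C.Obj} {m m' : ℤ} (h : m = m')
    (c : ℤ) (f : C.P k X Y m) : C.dcast h (c • f) = c • C.dcast h f := by
  subst h; rfl

lemma dcast_sub {k : ℕ} {X : Fin k → C.Obj} {Y : C.Obj} {m m' : ℤ} (h : m = m')
    (f g : C.P k X Y m) : C.dcast h (f - g) = C.dcast h f - C.dcast h g := by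
  subst h; rfl

lemma dcast_dcast {k : ℕ} {X : Fin k → C.Obj} {Y : C.Obj} {m m' m'' : ℤ}
    (h : m = m') (h' : m' = m'') (f : C.P k X Y m) :
    C.dcast h' (C.dcast h f) = C.dcast (h.trans h') f := by
  subst h; subst h'; rfl

lemma pcast_add {k k' : ℕ} (h : k = k') {X : Fin k → C.Obj} {X' : Fin k' → C.Obj}
    (hX : ∀ a, X a = X' (Fin.cast h a)) {Y : C.Obj} {m : ℤ}
    (f g : C.P k X Y m) :
    C.pcast h (f + g) hX = C.pcast h f hX + C.pcast h g hX := by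
  subst h
  unfold pcast
  generalize (funext fun a => (hX a).trans (congrArg X' (Fin.ext (by simp))) :
      X = X') = hXX
  subst hXX
  rfl

lemma pcast_pd {k k' : ℕ} (h : k = k') {X : Fin k → C.Obj} {X' : Fin k' → C.Obj}
    (hX : ∀ a, X a = X' (Fin.cast h a)) {Y : C.Obj} {m : ℤ} (f : C.P k X Y m) :
    C.pcast h (C.pd f) hX = C.pd (C.pcast h f hX) := by
  subst h
  unfold pcast
  generalize (funext fun a => (hX a).trans (congrArg X' (Fin.ext (by simp))) :
      X = X') = hXX
  subst hXX
  rfl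

/-- Transport a `Hom` element along an equality of source objects. -/
def hcast {X X' Y : C.Obj} (h : X = X') {m : ℤ} (f : C.P 1 (fun _ => X) Y m) :
    C.P 1 (fun _ => X') Y m := h ▸ f

/-- The Hom complexes of the underlying DG category: `Hom X Y • := P 1 {X} Y •`. -/
abbrev Hom (X Y : C.Obj) (n : ℤ) : Type v := C.P 1 (fun _ => X) Y n

/-- Composition in the underlying DG category, via the pseudo-tensor
composition along the unique surjection `Fin 1 → Fin 1`. -/
def hcomp {X Y Z : C.Obj} {m n : ℤ} (f : C.Hom Y Z m) (g : C.Hom X Y n) :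
    C.Hom X Z (m + n) :=
  C.dcast (by simp) (C.pcomp (fun _ : Fin 1 => (0 : Fin 1))
    (fun b => ⟨0, Subsingleton.elim _ _⟩) (X := fun _ => X) (m := m)
    (n := fun _ => n) f
    (fun i => C.pcast (fiberCard_bij _ ⟨fun a b _ => Subsingleton.elim a b,
      fun b => ⟨0, Subsingleton.elim _ _⟩⟩ i).symm g (fun a => rfl)))

/-- Composition of an element of `Hom A B` with an element of `P k X A`:
the module structure of `P k X •` over the DG category. -/
def act1 {k : ℕ} (hk : 0 < k) {X : Fin k → C.Obj} {A B : C.Obj} {m n : ℤ}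
    (h : C.Hom A B m) (f : C.P k X A n) : C.P k X B (m + n) :=
  C.dcast (by simp) (C.pcomp (fun _ : Fin k => (0 : Fin 1))
    (fun b => ⟨⟨0, hk⟩, Subsingleton.elim _ _⟩) (X := X) (m := m)
    (n := fun _ => n) h
    (fun i => C.pcast (fiberCard_const i).symm f
      (fun a => congrArg X (Fin.ext
        (((fiberEmb_const_val i (Fin.cast (fiberCard_const i).symm a)).trans
          (Fin.coe_cast _ a)).symm)))))

/-- Composition along the identity which acts by a morphism `e` in the slot
`i₀` and by identities in all other slots: `φ ↦ φ(id,…,e,…,id)`. -/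
def actAt {p : ℕ} {X X' : Fin p → C.Obj} {Y : C.Obj} {m d₀ : ℤ}
    (i₀ : Fin p) (e : C.Hom (X' i₀) (X i₀) d₀) (hX : ∀ i, i ≠ i₀ → X' i = X i)
    (φ : C.P p X Y m) : C.P p X' Y (m + d₀) :=
  C.dcast (by rw [Finset.sum_ite_eq' Finset.univ i₀ (fun _ => d₀)]; simp)
    (C.pcomp (id : Fin p → Fin p) Function.surjective_id (X := X') (m := m)
      (n := fun i => if i = i₀ then d₀ else 0) φ
      (fun i =>
        if h : i = i₀ then
          C.dcast (by simp [h]) (C.pcast (fiberCard_id i).symm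
            (C.ocast (congrArg X h.symm) e)
            (fun a => congrArg X'
              (((fiberEmb_id i (Fin.cast (fiberCard_id i).symm a)).trans h).symm)))
        else
          C.dcast (by simp [h]) (C.pcast (fiberCard_id i).symm
            (C.one (X i))
            (fun a => (hX i h).symm.trans (congrArg X'
              (fiberEmb_id i (Fin.cast (fiberCard_id i).symm a)).symm)))))

end PTData

namespace PTData
variable (C : PTData.{u, v})

/-- The homotopy relation on elements of the same degree. -/
def Htp {k : ℕ} {X : Fin k → C.Obj} {Y : C.Obj} {n : ℤ} (f g : C.P k X Y n) : Prop :=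
  ∃ u : C.P k X Y (n - 1), f - g = C.dcast (by ring) (C.pd u)

end PTData

/-- The axioms of a pseudo-tensor structure on a DG category: the
differentials square to zero, composition is multi-additive and a map of
complexes (Leibniz rule), composition is associative with the sign
`(-1)^{Σᵢ(Σ_{l<i}Σ_{j∈J_l} p_j)·n_i}`, and the elements `id_E = one E` are
closed and are units for composition. -/
structure PTAxioms (C : PTData.{u, v}) : Prop where
  pd_add : ∀ {k : ℕ} {X : Fin k → C.Obj} {Y : C.Obj} {n : ℤ}
      (f g : C.P k X Y n), C.pd (f + g) = C.pd f + C.pd g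
  pd_pd : ∀ {k : ℕ} {X : Fin k → C.Obj} {Y : C.Obj} {n : ℤ}
      (f : C.P k X Y n), C.pd (C.pd f) = 0
  pone_pd : ∀ (E : C.Obj), C.pd (C.one E) = 0
  pcomp_add_left : ∀ {l p : ℕ} (π : Fin p → Fin l) (hπ : Function.Surjective π)
      {X : Fin p → C.Obj} {Y : Fin l → C.Obj} {Z : C.Obj} {m : ℤ} {n : Fin l → ℤ}
      (f f' : C.P l Y Z m)
      (g : ∀ i, C.P (fiberCard π i) (X ∘ fiberEmb π i) (Y i) (n i)),
      C.pcomp π hπ (f + f') g = C.pcomp π hπ f g + C.pcomp π hπ f' g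
  pcomp_add_right : ∀ {l p : ℕ} (π : Fin p → Fin l) (hπ : Function.Surjective π)
      {X : Fin p → C.Obj} {Y : Fin l → C.Obj} {Z : C.Obj} {m : ℤ} {n : Fin l → ℤ}
      (f : C.P l Y Z m)
      (g : ∀ i, C.P (fiberCard π i) (X ∘ fiberEmb π i) (Y i) (n i))
      (i₀ : Fin l) (x y : C.P (fiberCard π i₀) (X ∘ fiberEmb π i₀) (Y i₀) (n i₀)),
      C.pcomp π hπ f (Function.update g i₀ (x + y))
        = C.pcomp π hπ f (Function.update g i₀ x)
          + C.pcomp π hπ f (Function.update g i₀ y)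
  pcomp_pd : ∀ {l p : ℕ} (π : Fin p → Fin l) (hπ : Function.Surjective π)
      {X : Fin p → C.Obj} {Y : Fin l → C.Obj} {Z : C.Obj} {m : ℤ} {n : Fin l → ℤ}
      (f : C.P l Y Z m)
      (g : ∀ i, C.P (fiberCard π i) (X ∘ fiberEmb π i) (Y i) (n i)),
      C.pd (C.pcomp π hπ f g)
        = C.dcast (by ring) (C.pcomp π hπ (C.pd f) g)
          + ∑ i : Fin l, ((Int.negOnePow (m + ∑ l' ∈ Finset.Iio i, n l') : ℤ)) •
              C.dcast (by
                  rw [Finset.sum_update_of_mem (Finset.mem_univ i),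
                    Finset.sum_eq_sum_sdiff_singleton_add (Finset.mem_univ i) n]
                  ring)
                (C.pcomp π hπ (n := Function.update n i (n i + 1)) f
                  (fun i' =>
                    if h : i' = i then
                      C.dcast (by subst h; simp) (C.pd (g i'))
                    else
                      C.dcast (Function.update_of_ne h _ _).symm (g i')))
  passoc : ∀ {l p q : ℕ} (π : Fin p → Fin l) (hπ : Function.Surjective π)
      (π' : Fin q → Fin p) (hπ' : Function.Surjective π')
      {W : Fin q → C.Obj} {X : Fin p → C.Obj} {Y : Fin l → C.Obj} {Z : C.Obj}
      {m : ℤ} {n : Fin l → ℤ} {q' : Fin p → ℤ}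
      (f : C.P l Y Z m)
      (g : ∀ i, C.P (fiberCard π i) (X ∘ fiberEmb π i) (Y i) (n i))
      (h : ∀ j, C.P (fiberCard π' j) (W ∘ fiberEmb π' j) (X j) (q' j))
      (hcard : ∀ i b, fiberCard π' (fiberEmb π i b) = fiberCard (fiberMap π π' i) b)
      (hemb : ∀ i b a, fiberEmb π' (fiberEmb π i b) a
          = fiberEmb (π ∘ π') i (fiberEmb (fiberMap π π' i) b (Fin.cast (hcard i b) a))),
      C.pcomp (π ∘ π') (hπ.comp hπ') f
        (fun i => C.pcomp (fiberMap π π' i) (fiberMap_surjective π π' hπ' i)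
          (g i)
          (fun b => C.pcast (hcard i b) (h (fiberEmb π i b))
            (fun a => congrArg W (hemb i b a))))
      = (Int.negOnePow (∑ i : Fin l,
            (∑ i' ∈ Finset.Iio i, ∑ b, q' (fiberEmb π i' b)) * n i) : ℤ) •
          C.dcast (by rw [Finset.sum_add_distrib, sum_fiberEmb π q']; ring)
            (C.pcomp π' hπ' (C.pcomp π hπ f g) h)
  pcomp_one : ∀ {p : ℕ} {X : Fin p → C.Obj} {Y : C.Obj} {m : ℤ} (f : C.P p X Y m),
      C.pcomp (id : Fin p → Fin p) Function.surjective_id (n := fun _ => 0) f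
        (fun i => C.pcast (fiberCard_id i).symm (C.one (X i))
          (fun a => congrArg X (fiberEmb_id i (Fin.cast (fiberCard_id i).symm a)).symm))
        = C.dcast (by simp) f
  pone_comp : ∀ {p : ℕ} (hp : 0 < p) {X : Fin p → C.Obj} {Y : C.Obj} {m : ℤ}
      (f : C.P p X Y m),
      C.pcomp (fun _ : Fin p => (0 : Fin 1))
        (fun b => ⟨⟨0, hp⟩, Subsingleton.elim _ _⟩) (n := fun _ => m) (C.one Y)
        (fun i => C.pcast (fiberCard_const i).symm f
          (fun a => congrArg X (Fin.ext
            (((fiberEmb_const_val i (Fin.cast (fiberCard_const i).symm a)).trans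
              (Fin.coe_cast _ a)).symm))))
        = C.dcast (by simp) f

namespace PTData

variable (C : PTData.{u, v})

lemma fiberCard_pos {p l : ℕ} (π : Fin p → Fin l) (hπ : Function.Surjective π)
    (i : Fin l) : 0 < fiberCard π i := by
  obtain ⟨j, hj⟩ := hπ i
  rw [fiberCard]
  exact Finset.card_pos.mpr ⟨j, by simp [fiberSet, hj]⟩

end PTData

/-- A representation of a pseudo-tensor structure on a DG category `C`
(= the structure of a *representable* pseudo-tensor structure):  for every
finite nonempty family `X : Fin (k+1) → Obj` an object `⊗ᵢXᵢ = tob X` and a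
universal `0`-cycle `tid X ∈ P({Xᵢ}, ⊗Xᵢ)⁰` such that composition with
`tid X` is a quasi-isomorphism `Hom(⊗Xᵢ, −)^* → P({Xᵢ}, −)^*` — this is
exactly an isomorphism `λ⁻¹ : Hom(⊗Xᵢ,−)^* → P_I({Xᵢ},−)^*` in the derived
category `D(C^op)` of `C^op`-modules, realized by an honest quasi-isomorphism
of modules out of the representable module.  For singleton families the
tensor object is `X 0` and `λ` is the identity (`tid` is `id_{X 0}`). -/
structure PTRep (C : PTData.{u, v}) where
  tob : ∀ {k : ℕ}, (Fin (k + 1) → C.Obj) → C.Obj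
  tid : ∀ {k : ℕ} (X : Fin (k + 1) → C.Obj), C.P (k + 1) X (tob X) 0
  tid_cycle : ∀ {k : ℕ} (X : Fin (k + 1) → C.Obj), C.pd (tid X) = 0
  lam_surj : ∀ {k : ℕ} (X : Fin (k + 1) → C.Obj) (Y : C.Obj) (n : ℤ)
      (f : C.P (k + 1) X Y n), C.pd f = 0 →
      ∃ h : C.Hom (tob X) Y n, C.pd h = 0 ∧
        C.Htp (C.dcast (add_zero n) (C.act1 (Nat.succ_pos k) h (tid X))) f
  lam_inj : ∀ {k : ℕ} (X : Fin (k + 1) → C.Obj) (Y : C.Obj) (n : ℤ)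
      (h h' : C.Hom (tob X) Y n), C.pd h = 0 → C.pd h' = 0 →
      C.Htp (C.dcast (add_zero n) (C.act1 (Nat.succ_pos k) h (tid X)))
        (C.dcast (add_zero n) (C.act1 (Nat.succ_pos k) h' (tid X))) →
      C.Htp h h'
  tob_one : ∀ (X : Fin 1 → C.Obj), tob X = X 0
  tid_one : ∀ (X : Fin 1 → C.Obj),
      tid X = C.pcast rfl (C.ocast (tob_one X).symm (C.one (X 0)))
        (fun a => congrArg X (Subsingleton.elim _ _))

namespace PTData

variable {C} (R : PTRep C)

/-- The tensor object of a family indexed by an arbitrary positive `Fin k`. -/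
def tobF {k : ℕ} (hk : 0 < k) (X : Fin k → C.Obj) : C.Obj :=
  R.tob (fun a : Fin (k - 1 + 1) => X (Fin.cast (Nat.succ_pred_eq_of_pos hk) a))

/-- The universal cycle for a family indexed by an arbitrary positive `Fin k`. -/
def tidF {k : ℕ} (hk : 0 < k) (X : Fin k → C.Obj) :
    C.P k X (tobF R hk X) 0 :=
  C.pcast (Nat.succ_pred_eq_of_pos hk) (R.tid _) (fun _ => rfl)

lemma tobF_congr {k k' : ℕ} (hk : 0 < k) (hk' : 0 < k') (h : k = k')
    {X : Fin k → C.Obj} {X' : Fin k' → C.Obj}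
    (hX : ∀ a, X a = X' (Fin.cast h a)) : tobF R hk X = tobF R hk' X' := by
  subst h
  have : X = X' := funext fun a => (hX a).trans (congrArg X' rfl)
  rw [this]

variable (C)

/-- The canonical element `(λ⁻¹id)((λ⁻¹id)ᵢ) ∈ P_J({X_j}, ⊗ᵢ(⊗_{j∈Jᵢ}X_j))⁰`
whose image under `λ` is the canonical morphism `ε_π`. -/
def epsElt {l p : ℕ} (hp : 0 < p) (π : Fin p → Fin l)
    (hπ : Function.Surjective π) (X : Fin p → C.Obj) :
    C.P p X
      (tobF R (Fin.pos (π ⟨0, hp⟩))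
        (fun i => tobF R (fiberCard_pos π hπ i) (X ∘ fiberEmb π i))) 0 :=
  C.dcast (by simp)
    (C.pcomp π hπ (n := fun _ => 0)
      (tidF R (Fin.pos (π ⟨0, hp⟩))
        (fun i => tobF R (fiberCard_pos π hπ i) (X ∘ fiberEmb π i)))
      (fun i => tidF R (fiberCard_pos π hπ i) (X ∘ fiberEmb π i)))

/-- `F` *is* the canonical morphism `ε_π : ⊗_{j∈J}X_j → ⊗ᵢ(⊗_{j∈Jᵢ}X_j)`
(as a morphism of `H⁰C`, characterized by `λ(F) = (λ⁻¹id)((λ⁻¹id)ᵢ)`,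
i.e. `F∘tid ∼ εElt`). -/
def IsEps {l p : ℕ} (hp : 0 < p) (π : Fin p → Fin l)
    (hπ : Function.Surjective π) (X : Fin p → C.Obj)
    (F : C.Hom (tobF R hp X)
      (tobF R (Fin.pos (π ⟨0, hp⟩))
        (fun i => tobF R (fiberCard_pos π hπ i) (X ∘ fiberEmb π i))) 0) :
    Prop :=
  C.pd F = 0 ∧
    C.Htp (C.dcast (add_zero 0) (C.act1 hp F (tidF R hp X)))
      (epsElt C R hp π hπ X)

/-- The element `(λ⁻¹ id_{⊗B})((f_i)_i) ∈ P({Aᵢ}, ⊗Bᵢ)⁰`. -/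
def tidComp {k : ℕ} (hk : 0 < k) {A B : Fin k → C.Obj}
    (fs : ∀ i, C.Hom (A i) (B i) 0) : C.P k A (tobF R hk B) 0 :=
  C.dcast (by simp)
    (C.pcomp (id : Fin k → Fin k) Function.surjective_id (n := fun _ => 0)
      (tidF R hk B)
      (fun i => C.pcast (fiberCard_id i).symm (fs i)
        (fun a => congrArg A (fiberEmb_id i (Fin.cast (fiberCard_id i).symm a)).symm)))

/-- `F` *is* the tensor product `⊗ᵢfᵢ : ⊗Aᵢ → ⊗Bᵢ` of the morphisms `fᵢ`
(in `H⁰C`, characterized through the representability isomorphisms). -/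
def IsTenMap {k : ℕ} (hk : 0 < k) {A B : Fin k → C.Obj}
    (fs : ∀ i, C.Hom (A i) (B i) 0)
    (F : C.Hom (tobF R hk A) (tobF R hk B) 0) : Prop :=
  C.pd F = 0 ∧ (∀ i, C.pd (fs i) = 0) ∧
    C.Htp (C.dcast (add_zero 0) (C.act1 hk F (tidF R hk A)))
      (tidComp C R hk fs)

end PTData

/-!
Representability makes `λ` faithful on closed morphisms: a closed degree-`0` morphism `h` out of
`⊗_K X_k` is determined up to homotopy by the cycle `h ∘ λ⁻¹(id)`. So it suffices to show that
both composites, applied to `λ⁻¹(id)`, are homotopic to the iterated universal cycle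
`λ⁻¹(id)((λ⁻¹(id)((λ⁻¹(id))_{j ∈ J_i}))_{i ∈ I})` (`epsElt₂`). For `ε_π ∘ ε_{π'}` this is the
defining property of the two `ε`'s followed by associativity of composition along `K ↠ J ↠ I`.
For `(⊗ᵢ ε_{π'ᵢ}) ∘ ε_{ππ'}`, associativity along `K ↠ I ↠ I` moves `ε_{π'ᵢ}` into the `i`-th
slot of `λ⁻¹(id)`, where its defining property applies. All elements involved have degree `0`, so
associativity carries no signs, and by the Leibniz rule composition with cycles respects homotopy.
-/

open PTData

section Fibers

variable {l p q : ℕ}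

lemma mem_fiberSet {π : Fin p → Fin l} {i : Fin l} {j : Fin p} :
    j ∈ fiberSet π i ↔ π j = i := by
  simp [fiberSet]

lemma fiberEmb_strictMono (π : Fin p → Fin l) (i : Fin l) : StrictMono (fiberEmb π i) :=
  fun _ _ h => ((fiberSet π i).orderIsoOfFin rfl).strictMono h

lemma exists_fiberEmb_eq {π : Fin p → Fin l} {i : Fin l} {j : Fin p} (h : π j = i) :
    ∃ a, fiberEmb π i a = j :=
  ⟨((fiberSet π i).orderIsoOfFin rfl).symm ⟨j, mem_fiberSet.2 h⟩, by simp [fiberEmb]⟩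

lemma fiberEmb_fiberMap (π : Fin p → Fin l) (π' : Fin q → Fin p) (i : Fin l)
    (a : Fin (fiberCard (π ∘ π') i)) :
    fiberEmb π i (fiberMap π π' i a) = π' (fiberEmb (π ∘ π') i a) := by
  simp only [fiberEmb, fiberMap, OrderIso.apply_symm_apply]

lemma fiberMap_eq_iff {π : Fin p → Fin l} {π' : Fin q → Fin p} {i : Fin l}
    (a : Fin (fiberCard (π ∘ π') i)) (b : Fin (fiberCard π i)) :
    fiberMap π π' i a = b ↔ π' (fiberEmb (π ∘ π') i a) = fiberEmb π i b := by
  rw [← fiberEmb_fiberMap π π' i a, (fiberEmb_strictMono π i).injective.eq_iff]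

lemma fiberCard_fiberEmb (π : Fin p → Fin l) (π' : Fin q → Fin p) (i : Fin l)
    (b : Fin (fiberCard π i)) :
    fiberCard π' (fiberEmb π i b) = fiberCard (fiberMap π π' i) b := by
  refine (Finset.card_nbij (fiberEmb (π ∘ π') i) (fun a ha => ?_)
    (fiberEmb_strictMono _ i).injective.injOn (fun j hj => ?_)).symm
  · exact mem_fiberSet.2 ((fiberMap_eq_iff a b).1 (mem_fiberSet.1 ha))
  · have hj : π' j = fiberEmb π i b := mem_fiberSet.1 hj
    obtain ⟨a, rfl⟩ := exists_fiberEmb_eq (π := π ∘ π') (i := i)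
      (by rw [Function.comp_apply, hj, fiberEmb_mem π i b])
    exact ⟨a, mem_fiberSet.2 ((fiberMap_eq_iff a b).2 hj), rfl⟩

lemma fiberEmb_fiberEmb (π : Fin p → Fin l) (π' : Fin q → Fin p) (i : Fin l)
    (b : Fin (fiberCard π i)) (a : Fin (fiberCard π' (fiberEmb π i b))) :
    fiberEmb π' (fiberEmb π i b) a = fiberEmb (π ∘ π') i
      (fiberEmb (fiberMap π π' i) b (Fin.cast (fiberCard_fiberEmb π π' i b) a)) := by
  have hmono : StrictMono fun a => fiberEmb (π ∘ π') i
      (fiberEmb (fiberMap π π' i) b (Fin.cast (fiberCard_fiberEmb π π' i b) a)) :=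
    (fiberEmb_strictMono _ i).comp ((fiberEmb_strictMono _ b).comp (Fin.cast_strictMono _))
  have hmem : ∀ a, fiberEmb (π ∘ π') i
      (fiberEmb (fiberMap π π' i) b (Fin.cast (fiberCard_fiberEmb π π' i b) a))
        ∈ fiberSet π' (fiberEmb π i b) := fun a =>
    mem_fiberSet.2 ((fiberMap_eq_iff _ b).1 (fiberEmb_mem _ b _))
  exact (congrFun (Finset.orderEmbOfFin_unique rfl hmem hmono) a).symm

lemma fiberEmb_const_cast {k : ℕ} (i : Fin 1)
    (h : k = fiberCard (fun _ : Fin k => (0 : Fin 1)) i) (a : Fin k) :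
    fiberEmb (fun _ : Fin k => (0 : Fin 1)) i (Fin.cast h a) = a :=
  Fin.ext (fiberEmb_const_val i (Fin.cast h a))

lemma fiberMap_const_cast (π : Fin p → Fin l) (i : Fin 1)
    (hl : l = fiberCard (fun _ : Fin l => (0 : Fin 1)) i)
    (hp : p = fiberCard ((fun _ : Fin l => (0 : Fin 1)) ∘ π) i) (a : Fin p) :
    Fin.cast hl (π a) = fiberMap (fun _ : Fin l => (0 : Fin 1)) π i (Fin.cast hp a) := by
  apply (fiberEmb_strictMono _ i).injective
  rw [fiberEmb_const_cast, fiberEmb_fiberMap]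
  exact congrArg π (fiberEmb_const_cast (k := p) i hp a).symm

end Fibers

namespace PTData

section Casts

variable (C : PTData.{u, v})

lemma heq_dcast {k : ℕ} {X : Fin k → C.Obj} {Y : C.Obj} {m m' : ℤ} (h : m = m')
    (f : C.P k X Y m) : HEq (C.dcast h f) f := by subst h; rfl

lemma heq_pcast {k k' : ℕ} (h : k = k') {X : Fin k → C.Obj} {X' : Fin k' → C.Obj}
    {Y : C.Obj} {m : ℤ} (f : C.P k X Y m) (hX : ∀ a, X a = X' (Fin.cast h a)) :
    HEq (C.pcast h f hX) f := by
  subst h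
  obtain rfl : X = X' := funext hX
  rfl

lemma dcast_eq_of_heq {k : ℕ} {X : Fin k → C.Obj} {Y : C.Obj} {m m' : ℤ}
    (h : m' = m) {f : C.P k X Y m} {g : C.P k X Y m'} (hh : HEq g f) :
    C.dcast h g = f := by subst h; exact eq_of_heq hh

lemma dcast_eq_dcast_of_heq {k : ℕ} {X : Fin k → C.Obj} {Y : C.Obj}
    {m₁ m₂ m : ℤ} (h : m₁ = m) (h' : m₂ = m) {f : C.P k X Y m₁}
    {g : C.P k X Y m₂} (hh : HEq f g) : C.dcast h f = C.dcast h' g := by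
  subst h; subst h'; exact eq_of_heq hh

lemma ocast_eq_of_heq {k : ℕ} {X : Fin k → C.Obj} {Y Y' : C.Obj} (h : Y = Y')
    {m : ℤ} {f : C.P k X Y m} {g : C.P k X Y' m} (hh : HEq f g) :
    C.ocast h f = g := by subst h; exact eq_of_heq hh

lemma dcast_neg {k : ℕ} {X : Fin k → C.Obj} {Y : C.Obj} {m m' : ℤ} (h : m = m')
    (f : C.P k X Y m) : C.dcast h (-f) = -C.dcast h f := by subst h; rfl

lemma ocast_zero {k : ℕ} {X : Fin k → C.Obj} {Y Y' : C.Obj} (h : Y = Y') {m : ℤ} :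
    C.ocast h (0 : C.P k X Y m) = 0 := by subst h; rfl

lemma pcast_zero {k k' : ℕ} (h : k = k') {X : Fin k → C.Obj} {X' : Fin k' → C.Obj}
    {Y : C.Obj} {m : ℤ} (hX : ∀ a, X a = X' (Fin.cast h a)) :
    C.pcast h (0 : C.P k X Y m) hX = 0 := by
  simpa using C.pcast_add h hX (0 : C.P k X Y m) 0

lemma pd_dcast {k : ℕ} {X : Fin k → C.Obj} {Y : C.Obj} {m m' : ℤ} (h : m = m')
    (f : C.P k X Y m) : C.pd (C.dcast h f) = C.dcast (by rw [h]) (C.pd f) := by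
  subst h; rfl

lemma pd_ocast {k : ℕ} {X : Fin k → C.Obj} {Y Y' : C.Obj} (h : Y = Y') {m : ℤ}
    (f : C.P k X Y m) : C.pd (C.ocast h f) = C.ocast h (C.pd f) := by
  subst h; rfl

lemma pd_pcast_eq_zero {k k' : ℕ} (h : k = k') {X : Fin k → C.Obj}
    {X' : Fin k' → C.Obj} {Y : C.Obj} {m : ℤ} {f : C.P k X Y m}
    (hX : ∀ a, X a = X' (Fin.cast h a)) (hf : C.pd f = 0) :
    C.pd (C.pcast h f hX) = 0 := by
  rw [← C.pcast_pd, hf, C.pcast_zero]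

lemma pcomp_dcast_left {l p : ℕ} (π : Fin p → Fin l) (hπ : Function.Surjective π)
    {X : Fin p → C.Obj} {Y : Fin l → C.Obj} {Z : C.Obj} {m m' : ℤ} (h : m = m')
    {n : Fin l → ℤ} (f : C.P l Y Z m)
    (g : ∀ i, C.P (fiberCard π i) (X ∘ fiberEmb π i) (Y i) (n i)) :
    C.pcomp π hπ (C.dcast h f) g = C.dcast (by rw [h]) (C.pcomp π hπ f g) := by
  subst h; rfl

lemma pcomp_heq_of_slots {l p : ℕ} (π : Fin p → Fin l) (hπ : Function.Surjective π)
    {X : Fin p → C.Obj} {Y : Fin l → C.Obj} {Z : C.Obj} {m : ℤ} (f : C.P l Y Z m)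
    {n₁ n₂ : Fin l → ℤ} (hn : n₁ = n₂)
    {g₁ : ∀ i, C.P (fiberCard π i) (X ∘ fiberEmb π i) (Y i) (n₁ i)}
    {g₂ : ∀ i, C.P (fiberCard π i) (X ∘ fiberEmb π i) (Y i) (n₂ i)}
    (hg : ∀ i, HEq (g₁ i) (g₂ i)) :
    HEq (C.pcomp π hπ f g₁) (C.pcomp π hπ f g₂) := by
  subst hn
  obtain rfl : g₁ = g₂ := funext fun i => eq_of_heq (hg i)
  rfl

lemma htp_congr {k₁ k₂ : ℕ} (hk : k₁ = k₂) {X₁ : Fin k₁ → C.Obj}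
    {X₂ : Fin k₂ → C.Obj} (hX : ∀ a, X₁ a = X₂ (Fin.cast hk a))
    {Y₁ Y₂ : C.Obj} (hY : Y₁ = Y₂) {n₁ n₂ : ℤ} (hn : n₁ = n₂)
    {f₁ g₁ : C.P k₁ X₁ Y₁ n₁} {f₂ g₂ : C.P k₂ X₂ Y₂ n₂}
    (hf : HEq f₁ f₂) (hg : HEq g₁ g₂) : C.Htp f₁ g₁ → C.Htp f₂ g₂ := by
  subst hk hY hn
  obtain rfl : X₁ = X₂ := funext hX
  rw [eq_of_heq hf, eq_of_heq hg]
  exact id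

lemma htp_dcast {k : ℕ} {X : Fin k → C.Obj} {Y : C.Obj} {m m' : ℤ} (h : m = m')
    {f g : C.P k X Y m} (hfg : C.Htp f g) : C.Htp (C.dcast h f) (C.dcast h g) := by
  subst h; exact hfg

lemma htp_ocast {k : ℕ} {X : Fin k → C.Obj} {Y Y' : C.Obj} (h : Y = Y') {m : ℤ}
    {f g : C.P k X Y m} (hfg : C.Htp f g) : C.Htp (C.ocast h f) (C.ocast h g) := by
  subst h; exact hfg

lemma htp_pcast {k k' : ℕ} (h : k = k') {X : Fin k → C.Obj}
    {X' : Fin k' → C.Obj} {Y : C.Obj} {m : ℤ} {f g : C.P k X Y m}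
    (hX : ∀ a, X a = X' (Fin.cast h a)) (hfg : C.Htp f g) :
    C.Htp (C.pcast h f hX) (C.pcast h g hX) :=
  C.htp_congr h hX rfl rfl (C.heq_pcast h f hX).symm (C.heq_pcast h g hX).symm hfg

end Casts

section DegreeZero

variable (C : PTData.{u, v})

def pcomp₀ {l p : ℕ} (π : Fin p → Fin l) (hπ : Function.Surjective π)
    {X : Fin p → C.Obj} {Y : Fin l → C.Obj} {Z : C.Obj} (f : C.P l Y Z 0)
    (g : ∀ i, C.P (fiberCard π i) (X ∘ fiberEmb π i) (Y i) 0) : C.P p X Z 0 :=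
  C.dcast (by simp) (C.pcomp π hπ (n := fun _ => 0) f g)

def act₀ {k : ℕ} (hk : 0 < k) {X : Fin k → C.Obj} {A B : C.Obj}
    (h : C.Hom A B 0) (f : C.P k X A 0) : C.P k X B 0 :=
  C.dcast (add_zero 0) (C.act1 hk h f)

lemma dcast_hcomp_eq_act₀ {A B D : C.Obj} (h : C.Hom B D 0) (h' : C.Hom A B 0) :
    C.dcast (add_zero 0) (C.hcomp h h') = C.act₀ Nat.one_pos h h' :=
  rfl

lemma act₀_eq_pcomp₀ {k : ℕ} (hk : 0 < k) {X : Fin k → C.Obj} {A B : C.Obj}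
    (h : C.Hom A B 0) (f : C.P k X A 0) :
    C.act₀ hk h f = C.pcomp₀ (fun _ : Fin k => (0 : Fin 1))
      (fun _ => ⟨⟨0, hk⟩, Subsingleton.elim _ _⟩) h
      (fun i => C.pcast (fiberCard_const i).symm f
        (fun a => congrArg X (Fin.ext
          (((fiberEmb_const_val i (Fin.cast (fiberCard_const i).symm a)).trans
            (Fin.val_cast _ a)).symm)))) := by
  unfold act₀ act1 pcomp₀
  rw [C.dcast_dcast]

lemma act₀_ocast {k : ℕ} (hk : 0 < k) {X : Fin k → C.Obj} {A B B' : C.Obj}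
    (hB : B = B') (h : C.Hom A B 0) (f : C.P k X A 0) :
    C.act₀ hk (C.ocast hB h) f = C.ocast hB (C.act₀ hk h f) := by
  subst hB; rfl

lemma pcomp₀_heq {l₁ l₂ p₁ p₂ : ℕ} (hl : l₁ = l₂) (hp : p₁ = p₂)
    {π₁ : Fin p₁ → Fin l₁} {π₂ : Fin p₂ → Fin l₂}
    (h₁ : Function.Surjective π₁) (h₂ : Function.Surjective π₂)
    (hπ : ∀ a, Fin.cast hl (π₁ a) = π₂ (Fin.cast hp a))
    {X₁ : Fin p₁ → C.Obj} {X₂ : Fin p₂ → C.Obj} (hX : ∀ a, X₁ a = X₂ (Fin.cast hp a))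
    {Y₁ : Fin l₁ → C.Obj} {Y₂ : Fin l₂ → C.Obj} (hY : ∀ i, Y₁ i = Y₂ (Fin.cast hl i))
    {Z₁ Z₂ : C.Obj} (hZ : Z₁ = Z₂)
    {f₁ : C.P l₁ Y₁ Z₁ 0} {f₂ : C.P l₂ Y₂ Z₂ 0} (hf : HEq f₁ f₂)
    {g₁ : ∀ i, C.P (fiberCard π₁ i) (X₁ ∘ fiberEmb π₁ i) (Y₁ i) 0}
    {g₂ : ∀ i, C.P (fiberCard π₂ i) (X₂ ∘ fiberEmb π₂ i) (Y₂ i) 0}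
    (hg : ∀ i, HEq (g₁ i) (g₂ (Fin.cast hl i))) :
    HEq (C.pcomp₀ π₁ h₁ f₁ g₁) (C.pcomp₀ π₂ h₂ f₂ g₂) := by
  subst hl hp hZ
  obtain rfl : π₁ = π₂ := funext hπ
  obtain rfl : X₁ = X₂ := funext hX
  obtain rfl : Y₁ = Y₂ := funext hY
  obtain rfl : f₁ = f₂ := eq_of_heq hf
  obtain rfl : g₁ = g₂ := funext fun i => eq_of_heq (hg i)
  rfl

lemma act₀_heq {k₁ k₂ : ℕ} (hk : k₁ = k₂) (h₁ : 0 < k₁) (h₂ : 0 < k₂)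
    {X₁ : Fin k₁ → C.Obj} {X₂ : Fin k₂ → C.Obj} (hX : ∀ a, X₁ a = X₂ (Fin.cast hk a))
    {A B : C.Obj} (h : C.Hom A B 0) {f₁ : C.P k₁ X₁ A 0} {f₂ : C.P k₂ X₂ A 0}
    (hf : HEq f₁ f₂) : HEq (C.act₀ h₁ h f₁) (C.act₀ h₂ h f₂) := by
  subst hk
  obtain rfl : X₁ = X₂ := funext hX
  rw [eq_of_heq hf]

end DegreeZero

section Representability

variable {C : PTData.{u, v}} (R : PTRep C)

lemma pd_tidF {k : ℕ} (hk : 0 < k) (X : Fin k → C.Obj) : C.pd (tidF R hk X) = 0 :=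
  C.pd_pcast_eq_zero _ _ (R.tid_cycle _)

lemma tidF_heq {k₁ k₂ : ℕ} (hk : k₁ = k₂) (h₁ : 0 < k₁) (h₂ : 0 < k₂)
    {X₁ : Fin k₁ → C.Obj} {X₂ : Fin k₂ → C.Obj} (hX : ∀ a, X₁ a = X₂ (Fin.cast hk a)) :
    HEq (tidF R h₁ X₁) (tidF R h₂ X₂) := by
  subst hk
  obtain rfl : X₁ = X₂ := funext hX
  rfl

lemma htp_of_htp_act₀_tidF {k : ℕ} (hk : 0 < k) {X : Fin k → C.Obj} {Y : C.Obj}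
    {h h' : C.Hom (tobF R hk X) Y 0} (hh : C.pd h = 0) (hh' : C.pd h' = 0)
    (H : C.Htp (C.act₀ hk h (tidF R hk X)) (C.act₀ hk h' (tidF R hk X))) : C.Htp h h' :=
  R.lam_inj _ Y 0 h h' hh hh' (C.htp_congr (Nat.succ_pred_eq_of_pos hk).symm (fun _ => rfl)
    rfl rfl (C.act₀_heq _ hk (Nat.succ_pos _) (fun _ => rfl) _ (C.heq_pcast _ _ _))
    (C.act₀_heq _ hk (Nat.succ_pos _) (fun _ => rfl) _ (C.heq_pcast _ _ _)) H)

variable (C)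

lemma epsElt_eq_pcomp₀ {l p : ℕ} (hp : 0 < p) (π : Fin p → Fin l)
    (hπ : Function.Surjective π) (X : Fin p → C.Obj) :
    epsElt C R hp π hπ X = C.pcomp₀ π hπ (tidF R _ _)
      (fun i => tidF R (fiberCard_pos π hπ i) (X ∘ fiberEmb π i)) :=
  rfl

def epsElt₂ {l q r : ℕ} (hl : 0 < l) (π : Fin q → Fin l) (hπ : Function.Surjective π)
    (π' : Fin r → Fin q) (hπ' : Function.Surjective π') (X : Fin r → C.Obj) :
    C.P r X (tobF R hl (fun i => tobF R (fiberCard_pos π hπ i)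
      ((fun j => tobF R (fiberCard_pos π' hπ' j) (X ∘ fiberEmb π' j)) ∘ fiberEmb π i))) 0 :=
  C.pcomp₀ (π ∘ π') (hπ.comp hπ') (tidF R hl _)
    (fun i => C.pcomp₀ (fiberMap π π' i) (fiberMap_surjective π π' hπ' i)
      (tidF R (fiberCard_pos π hπ i) _)
      (fun b => C.pcast (fiberCard_fiberEmb π π' i b)
        (tidF R (fiberCard_pos π' hπ' (fiberEmb π i b)) (X ∘ fiberEmb π' (fiberEmb π i b)))
        (fun a => congrArg X (fiberEmb_fiberEmb π π' i b a))))

end Representability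

section Transitivity

variable {C : PTData.{u, v}} (R : PTRep C)

variable {l q r : ℕ} {π : Fin q → Fin l} (hπ : Function.Surjective π)
  {π' : Fin r → Fin q} (hπ' : Function.Surjective π') (X : Fin r → C.Obj)

lemma tobF_fiberMap_fiber (i : Fin l) (b : Fin (fiberCard π i)) :
    tobF R (fiberCard_pos (fiberMap π π' i) (fiberMap_surjective π π' hπ' i) b)
        ((X ∘ fiberEmb (π ∘ π') i) ∘ fiberEmb (fiberMap π π' i) b)
      = tobF R (fiberCard_pos π' hπ' (fiberEmb π i b)) (X ∘ fiberEmb π' (fiberEmb π i b)) :=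
  tobF_congr R _ _ (fiberCard_fiberEmb π π' i b).symm fun a =>
    (congrArg X (fiberEmb_fiberEmb π π' i b (Fin.cast _ a))).symm

lemma ocast_pcomp₀_epsElt_fiberMap (hl : 0 < l) (hobj : tobF R hl (fun i =>
      tobF R (fiberCard_pos π hπ i) (fun b =>
        tobF R (fiberCard_pos (fiberMap π π' i) (fiberMap_surjective π π' hπ' i) b)
          ((X ∘ fiberEmb (π ∘ π') i) ∘ fiberEmb (fiberMap π π' i) b)))
      = tobF R hl (fun i => tobF R (fiberCard_pos π hπ i)
        ((fun j => tobF R (fiberCard_pos π' hπ' j) (X ∘ fiberEmb π' j)) ∘ fiberEmb π i))) :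
    C.ocast hobj (C.pcomp₀ (π ∘ π') (hπ.comp hπ') (tidF R hl _)
        (fun i => epsElt C R (fiberCard_pos (π ∘ π') (hπ.comp hπ') i) (fiberMap π π' i)
          (fiberMap_surjective π π' hπ' i) (X ∘ fiberEmb (π ∘ π') i)))
      = epsElt₂ C R hl π hπ π' hπ' X := by
  have hfiber := tobF_fiberMap_fiber R (π := π) hπ' X
  have hslot : ∀ i, tobF R (fiberCard_pos π hπ i) (fun b =>
        tobF R (fiberCard_pos (fiberMap π π' i) (fiberMap_surjective π π' hπ' i) b)
          ((X ∘ fiberEmb (π ∘ π') i) ∘ fiberEmb (fiberMap π π' i) b))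
      = tobF R (fiberCard_pos π hπ i)
          ((fun j => tobF R (fiberCard_pos π' hπ' j) (X ∘ fiberEmb π' j)) ∘ fiberEmb π i) :=
    fun i => tobF_congr R _ _ rfl (hfiber i)
  refine C.ocast_eq_of_heq hobj (C.pcomp₀_heq (π₁ := π ∘ π') (π₂ := π ∘ π') rfl rfl _ _
    (fun _ => rfl) (fun _ => rfl) hslot hobj (tidF_heq R rfl _ _ hslot) fun i => ?_)
  refine C.pcomp₀_heq (π₁ := fiberMap π π' i) (π₂ := fiberMap π π' i) rfl rfl _ _
    (fun _ => rfl) (fun _ => rfl) (hfiber i) (hslot i) (tidF_heq R rfl _ _ (hfiber i))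
    fun b => ?_
  exact (tidF_heq R (fiberCard_fiberEmb π π' i b).symm _ _ fun a =>
    (congrArg X (fiberEmb_fiberEmb π π' i b (Fin.cast _ a))).symm).trans
      (C.heq_pcast _ _ _).symm

end Transitivity

end PTData

namespace PTAxioms

variable {C : PTData.{u, v}}

section Linearity

def pdHom (A : PTAxioms C) {k : ℕ} {X : Fin k → C.Obj} {Y : C.Obj} {n : ℤ} :
    C.P k X Y n →+ C.P k X Y (n + 1) :=
  AddMonoidHom.mk' C.pd A.pd_add

lemma pd_zero (A : PTAxioms C) {k : ℕ} {X : Fin k → C.Obj} {Y : C.Obj} {n : ℤ} :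
    C.pd (0 : C.P k X Y n) = 0 :=
  A.pdHom.map_zero

lemma pd_neg (A : PTAxioms C) {k : ℕ} {X : Fin k → C.Obj} {Y : C.Obj} {n : ℤ}
    (f : C.P k X Y n) :
    C.pd (-f) = -C.pd f :=
  A.pdHom.map_neg f

lemma pd_smul (A : PTAxioms C) {k : ℕ} {X : Fin k → C.Obj} {Y : C.Obj} {n : ℤ} (c : ℤ)
    (f : C.P k X Y n) : C.pd (c • f) = c • C.pd f :=
  A.pdHom.map_zsmul c f

variable {l p : ℕ} (π : Fin p → Fin l) (hπ : Function.Surjective π)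
  {X : Fin p → C.Obj} {Y : Fin l → C.Obj} {Z : C.Obj} {m : ℤ} {n : Fin l → ℤ}

def pcompLeftHom (A : PTAxioms C)
    (g : ∀ i, C.P (fiberCard π i) (X ∘ fiberEmb π i) (Y i) (n i)) :
    C.P l Y Z m →+ C.P p X Z (m + ∑ i, n i) :=
  AddMonoidHom.mk' (fun f => C.pcomp π hπ f g) (fun f f' => A.pcomp_add_left π hπ f f' g)

def pcompSlotHom (A : PTAxioms C) (f : C.P l Y Z m)
    (g : ∀ i, C.P (fiberCard π i) (X ∘ fiberEmb π i) (Y i) (n i)) (i₀ : Fin l) :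
    C.P (fiberCard π i₀) (X ∘ fiberEmb π i₀) (Y i₀) (n i₀) →+ C.P p X Z (m + ∑ i, n i) :=
  AddMonoidHom.mk' (fun x => C.pcomp π hπ f (Function.update g i₀ x))
    (A.pcomp_add_right π hπ f g i₀)

lemma pcomp_zero_left (A : PTAxioms C)
    (g : ∀ i, C.P (fiberCard π i) (X ∘ fiberEmb π i) (Y i) (n i)) :
    C.pcomp π hπ (0 : C.P l Y Z m) g = 0 :=
  (A.pcompLeftHom π hπ g).map_zero

lemma pcomp_sub_left (A : PTAxioms C) (f f' : C.P l Y Z m)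
    (g : ∀ i, C.P (fiberCard π i) (X ∘ fiberEmb π i) (Y i) (n i)) :
    C.pcomp π hπ (f - f') g = C.pcomp π hπ f g - C.pcomp π hπ f' g :=
  (A.pcompLeftHom π hπ g).map_sub f f'

lemma pcomp_update_sub (A : PTAxioms C) (f : C.P l Y Z m)
    (g : ∀ i, C.P (fiberCard π i) (X ∘ fiberEmb π i) (Y i) (n i)) (i₀ : Fin l)
    (x y : C.P (fiberCard π i₀) (X ∘ fiberEmb π i₀) (Y i₀) (n i₀)) :
    C.pcomp π hπ f (Function.update g i₀ (x - y))
      = C.pcomp π hπ f (Function.update g i₀ x) - C.pcomp π hπ f (Function.update g i₀ y) :=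
  (A.pcompSlotHom π hπ f g i₀).map_sub x y

lemma pcomp_eq_zero_of_slot (A : PTAxioms C) (f : C.P l Y Z m)
    {g : ∀ i, C.P (fiberCard π i) (X ∘ fiberEmb π i) (Y i) (n i)} (i₀ : Fin l)
    (hg : g i₀ = 0) : C.pcomp π hπ f g = 0 := by
  have := (A.pcompSlotHom π hπ f g i₀).map_zero
  rwa [← hg, pcompSlotHom, AddMonoidHom.mk'_apply, Function.update_eq_self] at this

end Linearity

section Homotopy

variable {k : ℕ} {X : Fin k → C.Obj} {Y : C.Obj} {n : ℤ}

lemma htp_refl (A : PTAxioms C) (f : C.P k X Y n) : C.Htp f f :=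
  ⟨0, by rw [sub_self, A.pd_zero, C.dcast_zero]⟩

lemma htp_of_eq (A : PTAxioms C) {f g : C.P k X Y n} (h : f = g) : C.Htp f g :=
  h ▸ A.htp_refl f

lemma htp_symm (A : PTAxioms C) {f g : C.P k X Y n} (h : C.Htp f g) : C.Htp g f := by
  obtain ⟨u, hu⟩ := h
  exact ⟨-u, by rw [A.pd_neg, C.dcast_neg, ← hu, neg_sub]⟩

lemma htp_trans (A : PTAxioms C) {f g h : C.P k X Y n} (h₁ : C.Htp f g) (h₂ : C.Htp g h) :
    C.Htp f h := by
  obtain ⟨u, hu⟩ := h₁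
  obtain ⟨w, hw⟩ := h₂
  exact ⟨u + w, by rw [A.pd_add, C.dcast_add, ← hu, ← hw, sub_add_sub_cancel]⟩

end Homotopy

section Leibniz

variable {l p : ℕ} (π : Fin p → Fin l) (hπ : Function.Surjective π)
  {X : Fin p → C.Obj} {Y : Fin l → C.Obj} {Z : C.Obj} {m : ℤ} {n : Fin l → ℤ}

lemma pd_pcomp_of_slots_closed (A : PTAxioms C) (f : C.P l Y Z m)
    (g : ∀ i, C.P (fiberCard π i) (X ∘ fiberEmb π i) (Y i) (n i))
    (hg : ∀ i, C.pd (g i) = 0) :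
    C.pd (C.pcomp π hπ f g) = C.dcast (by ring) (C.pcomp π hπ (C.pd f) g) := by
  rw [A.pcomp_pd π hπ f g, add_eq_left]
  refine Finset.sum_eq_zero fun i _ => ?_
  rw [A.pcomp_eq_zero_of_slot π hπ f i (by rw [dif_pos rfl, hg i, C.dcast_zero]),
    C.dcast_zero, smul_zero]

lemma pd_pcomp_eq_zero (A : PTAxioms C) {f : C.P l Y Z m}
    {g : ∀ i, C.P (fiberCard π i) (X ∘ fiberEmb π i) (Y i) (n i)}
    (hf : C.pd f = 0) (hg : ∀ i, C.pd (g i) = 0) : C.pd (C.pcomp π hπ f g) = 0 := by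
  rw [A.pd_pcomp_of_slots_closed π hπ f g hg, hf, A.pcomp_zero_left, C.dcast_zero]

lemma htp_pcomp_left (A : PTAxioms C) {f f' : C.P l Y Z m}
    (g : ∀ i, C.P (fiberCard π i) (X ∘ fiberEmb π i) (Y i) (n i))
    (hg : ∀ i, C.pd (g i) = 0) (hff' : C.Htp f f') :
    C.Htp (C.pcomp π hπ f g) (C.pcomp π hπ f' g) := by
  obtain ⟨u, hu⟩ := hff'
  refine ⟨C.dcast (by ring) (C.pcomp π hπ u g), ?_⟩
  rw [← A.pcomp_sub_left π hπ f f' g, hu, C.pcomp_dcast_left, C.pd_dcast,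
    A.pd_pcomp_of_slots_closed π hπ u g hg, C.dcast_dcast, C.dcast_dcast]

lemma pd_pcomp_of_closed_off_slot (A : PTAxioms C) {f : C.P l Y Z m} (hf : C.pd f = 0)
    (g : ∀ i, C.P (fiberCard π i) (X ∘ fiberEmb π i) (Y i) (n i)) (i₀ : Fin l)
    (hg : ∀ i, i ≠ i₀ → C.pd (g i) = 0) :
    C.pd (C.pcomp π hπ f g) = (Int.negOnePow (m + ∑ l' ∈ Finset.Iio i₀, n l') : ℤ) •
      C.dcast (by
          rw [Finset.sum_update_of_mem (Finset.mem_univ i₀),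
            Finset.sum_eq_sum_sdiff_singleton_add (Finset.mem_univ i₀) n]
          ring)
        (C.pcomp π hπ (n := Function.update n i₀ (n i₀ + 1)) f
          (fun i' => if h : i' = i₀ then C.dcast (by subst h; simp) (C.pd (g i'))
            else C.dcast (Function.update_of_ne h _ _).symm (g i'))) := by
  rw [A.pcomp_pd π hπ f g, hf, A.pcomp_zero_left, C.dcast_zero, zero_add]
  refine Finset.sum_eq_single_of_mem i₀ (Finset.mem_univ i₀) fun i _ hi => ?_
  rw [A.pcomp_eq_zero_of_slot π hπ f i (by rw [dif_pos rfl, hg i hi, C.dcast_zero]),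
    C.dcast_zero, smul_zero]

lemma exists_pd_eq_pcomp_update_pd (A : PTAxioms C) {f : C.P l Y Z m} (hf : C.pd f = 0)
    (g : ∀ i, C.P (fiberCard π i) (X ∘ fiberEmb π i) (Y i) (n i))
    (hg : ∀ i, C.pd (g i) = 0) (i₀ : Fin l)
    (u : C.P (fiberCard π i₀) (X ∘ fiberEmb π i₀) (Y i₀) (n i₀ - 1)) :
    ∃ w : C.P p X Z (m + ∑ i, n i - 1),
      C.pcomp π hπ f (Function.update g i₀ (C.dcast (by ring) (C.pd u)))
        = C.dcast (by ring) (C.pd w) := by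
  classical
  -- `w = ± f(g₁, …, u, …, gₗ)`: by the Leibniz rule only the slot of `u` contributes to `d w`
  set n' := Function.update n i₀ (n i₀ - 1)
  have hn' : ∀ j, j ≠ i₀ → n j = n' j := fun j h => (Function.update_of_ne h _ _).symm
  let gU : ∀ j, C.P (fiberCard π j) (X ∘ fiberEmb π j) (Y j) (n' j) :=
    Function.update (fun j => if h : j = i₀ then 0 else C.dcast (hn' j h) (g j)) i₀
      (C.dcast (Function.update_self i₀ _ n).symm u)
  have hgU : ∀ j (h : j ≠ i₀), gU j = C.dcast (hn' j h) (g j) := fun j h =>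
    (Function.update_of_ne h _ _).trans (dif_neg h)
  have key := A.pd_pcomp_of_closed_off_slot π hπ hf gU i₀ fun j h => by
    rw [hgU j h, C.pd_dcast, hg j, C.dcast_zero]
  have hdeg : Function.update n' i₀ (n' i₀ + 1) = n := by
    ext i
    rcases eq_or_ne i i₀ with rfl | h
    · simp [n']
    · rw [Function.update_of_ne h]
      exact (hn' i h).symm
  refine ⟨(Int.negOnePow (m + ∑ l' ∈ Finset.Iio i₀, n' l') : ℤ) • C.dcast (by
      rw [Finset.sum_update_of_mem (Finset.mem_univ i₀),
        Finset.sum_eq_sum_sdiff_singleton_add (Finset.mem_univ i₀) n]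
      ring) (C.pcomp π hπ f gU), ?_⟩
  rw [A.pd_smul, C.dcast_smul, C.pd_dcast, key, C.dcast_dcast, C.dcast_smul, C.dcast_dcast,
    smul_smul, ← Units.val_mul, Int.units_mul_self, Units.val_one, one_smul, eq_comm]
  refine C.dcast_eq_of_heq _ (C.pcomp_heq_of_slots π hπ f hdeg fun i' => ?_)
  by_cases h : i' = i₀
  · subst h
    have hgU₀ : gU i' = C.dcast (Function.update_self i' _ n).symm u :=
      Function.update_self i' _ _
    refine (heq_of_eq (dif_pos rfl)).trans ((C.heq_dcast _ _).trans ?_)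
    rw [hgU₀, C.pd_dcast]
    refine (C.heq_dcast _ _).trans ?_
    rw [Function.update_self]
    exact (C.heq_dcast _ _).symm
  · refine (heq_of_eq (dif_neg h)).trans ((C.heq_dcast _ _).trans ?_)
    rw [hgU i' h, Function.update_of_ne h]
    exact C.heq_dcast _ _

lemma htp_pcomp_update (A : PTAxioms C) {f : C.P l Y Z m} (hf : C.pd f = 0)
    (g : ∀ i, C.P (fiberCard π i) (X ∘ fiberEmb π i) (Y i) (n i))
    (hg : ∀ i, C.pd (g i) = 0) (i₀ : Fin l)
    {x y : C.P (fiberCard π i₀) (X ∘ fiberEmb π i₀) (Y i₀) (n i₀)} (hxy : C.Htp x y) :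
    C.Htp (C.pcomp π hπ f (Function.update g i₀ x))
      (C.pcomp π hπ f (Function.update g i₀ y)) := by
  obtain ⟨u, hu⟩ := hxy
  obtain ⟨w, hw⟩ := A.exists_pd_eq_pcomp_update_pd π hπ hf g hg i₀ u
  exact ⟨w, by rw [← A.pcomp_update_sub, hu, hw]⟩

lemma htp_pcomp_slots (A : PTAxioms C) {f : C.P l Y Z m} (hf : C.pd f = 0)
    {g g' : ∀ i, C.P (fiberCard π i) (X ∘ fiberEmb π i) (Y i) (n i)}
    (hg : ∀ i, C.pd (g i) = 0) (hg' : ∀ i, C.pd (g' i) = 0)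
    (hgg : ∀ i, C.Htp (g i) (g' i)) :
    C.Htp (C.pcomp π hπ f g) (C.pcomp π hπ f g') := by
  classical
  suffices H : ∀ s : Finset (Fin l),
      C.Htp (C.pcomp π hπ f g) (C.pcomp π hπ f fun i => if i ∈ s then g' i else g i) by
    simpa using H Finset.univ
  intro s
  induction s using Finset.induction_on with
  | empty => simpa using A.htp_refl (C.pcomp π hπ f g)
  | @insert a s ha ih =>
    set g₁ := fun i => if i ∈ s then g' i else g i
    have hg₁ : ∀ i, C.pd (g₁ i) = 0 := fun i => by
      by_cases hi : i ∈ s <;> simp [g₁, hi, hg, hg']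
    have hins : (fun i => if i ∈ insert a s then g' i else g i)
        = Function.update g₁ a (g' a) := by
      funext j
      rcases eq_or_ne j a with rfl | h <;> simp [g₁, *]
    rw [hins]
    refine A.htp_trans ih ?_
    conv_lhs => rw [← Function.update_eq_self a g₁]
    exact A.htp_pcomp_update π hπ hf g₁ hg₁ a (by simpa [g₁, ha] using hgg a)

end Leibniz

section DegreeZero

variable {l p : ℕ} (π : Fin p → Fin l) (hπ : Function.Surjective π)
  {X : Fin p → C.Obj} {Y : Fin l → C.Obj} {Z : C.Obj}

lemma pd_pcomp₀_eq_zero (A : PTAxioms C) {f : C.P l Y Z 0}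
    {g : ∀ i, C.P (fiberCard π i) (X ∘ fiberEmb π i) (Y i) 0}
    (hf : C.pd f = 0) (hg : ∀ i, C.pd (g i) = 0) : C.pd (C.pcomp₀ π hπ f g) = 0 := by
  rw [PTData.pcomp₀, C.pd_dcast, A.pd_pcomp_eq_zero π hπ hf hg, C.dcast_zero]

lemma htp_pcomp₀_left (A : PTAxioms C) {f f' : C.P l Y Z 0}
    (g : ∀ i, C.P (fiberCard π i) (X ∘ fiberEmb π i) (Y i) 0)
    (hg : ∀ i, C.pd (g i) = 0) (hff' : C.Htp f f') :
    C.Htp (C.pcomp₀ π hπ f g) (C.pcomp₀ π hπ f' g) :=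
  C.htp_dcast _ (A.htp_pcomp_left π hπ g hg hff')

lemma htp_pcomp₀_slots (A : PTAxioms C) {f : C.P l Y Z 0} (hf : C.pd f = 0)
    {g g' : ∀ i, C.P (fiberCard π i) (X ∘ fiberEmb π i) (Y i) 0}
    (hg : ∀ i, C.pd (g i) = 0) (hg' : ∀ i, C.pd (g' i) = 0)
    (hgg : ∀ i, C.Htp (g i) (g' i)) :
    C.Htp (C.pcomp₀ π hπ f g) (C.pcomp₀ π hπ f g') :=
  C.htp_dcast _ (A.htp_pcomp_slots π hπ hf hg hg' hgg)

variable {k : ℕ} (hk : 0 < k) {W : Fin k → C.Obj} {A' B : C.Obj}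

lemma pd_act₀_eq_zero (A : PTAxioms C) {h : C.Hom A' B 0} {f : C.P k W A' 0}
    (hh : C.pd h = 0) (hf : C.pd f = 0) : C.pd (C.act₀ hk h f) = 0 := by
  rw [C.act₀_eq_pcomp₀]
  exact A.pd_pcomp₀_eq_zero _ _ hh fun _ => C.pd_pcast_eq_zero _ _ hf

lemma htp_act₀_right (A : PTAxioms C) {h : C.Hom A' B 0} {f f' : C.P k W A' 0}
    (hh : C.pd h = 0) (hf : C.pd f = 0) (hf' : C.pd f' = 0) (hff' : C.Htp f f') :
    C.Htp (C.act₀ hk h f) (C.act₀ hk h f') := by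
  rw [C.act₀_eq_pcomp₀, C.act₀_eq_pcomp₀]
  exact A.htp_pcomp₀_slots _ _ hh (fun _ => C.pd_pcast_eq_zero _ _ hf)
    (fun _ => C.pd_pcast_eq_zero _ _ hf') fun _ => C.htp_pcast _ _ hff'

end DegreeZero

section Associativity

lemma pcomp₀_assoc (A : PTAxioms C) {l p q : ℕ} (π : Fin p → Fin l)
    (hπ : Function.Surjective π) (π' : Fin q → Fin p) (hπ' : Function.Surjective π')
    {W : Fin q → C.Obj} {X : Fin p → C.Obj} {Y : Fin l → C.Obj} {Z : C.Obj}
    (f : C.P l Y Z 0) (g : ∀ i, C.P (fiberCard π i) (X ∘ fiberEmb π i) (Y i) 0)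
    (h : ∀ j, C.P (fiberCard π' j) (W ∘ fiberEmb π' j) (X j) 0) :
    C.pcomp₀ π' hπ' (C.pcomp₀ π hπ f g) h
      = C.pcomp₀ (π ∘ π') (hπ.comp hπ') f
          (fun i => C.pcomp₀ (fiberMap π π' i) (fiberMap_surjective π π' hπ' i) (g i)
            (fun b => C.pcast (fiberCard_fiberEmb π π' i b) (h (fiberEmb π i b))
              (fun a => congrArg W (fiberEmb_fiberEmb π π' i b a)))) := by
  have base := A.passoc π hπ π' hπ' (m := 0) (n := fun _ => 0) (q' := fun _ => 0)
    f g h (fiberCard_fiberEmb π π') (fiberEmb_fiberEmb π π')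
  simp only [mul_zero, Finset.sum_const_zero, Int.negOnePow_zero, Units.val_one,
    one_smul] at base
  unfold PTData.pcomp₀
  rw [C.pcomp_dcast_left, C.dcast_dcast]
  refine C.dcast_eq_dcast_of_heq _ _ ?_
  refine ((heq_of_eq base).trans (C.heq_dcast _ _)).symm.trans ?_
  exact C.pcomp_heq_of_slots _ _ f (funext fun _ => by simp) fun _ => (C.heq_dcast _ _).symm

lemma act₀_pcomp₀ (A : PTAxioms C) {l p : ℕ} (hp : 0 < p) (hl : 0 < l)
    (π : Fin p → Fin l) (hπ : Function.Surjective π)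
    {X : Fin p → C.Obj} {Y : Fin l → C.Obj} {A' B : C.Obj}
    (h : C.Hom A' B 0) (f : C.P l Y A' 0)
    (g : ∀ i, C.P (fiberCard π i) (X ∘ fiberEmb π i) (Y i) 0) :
    C.act₀ hp h (C.pcomp₀ π hπ f g) = C.pcomp₀ π hπ (C.act₀ hl h f) g := by
  rw [C.act₀_eq_pcomp₀ hp h, C.act₀_eq_pcomp₀ hl h f,
    A.pcomp₀_assoc (fun _ : Fin l => (0 : Fin 1)) (fun _ => ⟨⟨0, hl⟩, Subsingleton.elim _ _⟩)
      π hπ h _ g]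
  refine eq_of_heq (C.pcomp₀_heq rfl rfl _ _ (fun _ => Subsingleton.elim _ _)
    (fun _ => rfl) (fun _ => rfl) rfl HEq.rfl fun i => ?_)
  have hl' := (fiberCard_const (k := l) i).symm
  have hp' := (fiberCard_const (k := p) i).symm
  refine (C.heq_pcast _ _ _).trans (C.pcomp₀_heq hl' hp' _ _
    (fiberMap_const_cast π i hl' hp')
    (fun a => (congrArg X (fiberEmb_const_cast (k := p) i hp' a)).symm)
    (fun b => (congrArg Y (fiberEmb_const_cast i hl' b)).symm)
    rfl (C.heq_pcast _ _ _).symm fun b => ?_)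
  exact (congr_arg_heq g (fiberEmb_const_cast i hl' b)).symm.trans (C.heq_pcast _ _ _).symm

lemma act₀_act₀ (A : PTAxioms C) {k : ℕ} (hk : 0 < k) {X : Fin k → C.Obj}
    {A' B D : C.Obj} (h₂ : C.Hom B D 0) (h₁ : C.Hom A' B 0) (x : C.P k X A' 0) :
    C.act₀ hk (C.act₀ Nat.one_pos h₂ h₁) x = C.act₀ hk h₂ (C.act₀ hk h₁ x) := by
  rw [C.act₀_eq_pcomp₀ hk (C.act₀ _ h₂ h₁) x, C.act₀_eq_pcomp₀ hk h₁ x]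
  exact (A.act₀_pcomp₀ hk Nat.one_pos _ _ h₂ h₁ _).symm

end Associativity

section Representability

lemma pd_epsElt (A : PTAxioms C) (R : PTRep C) {l p : ℕ} (hp : 0 < p)
    (π : Fin p → Fin l) (hπ : Function.Surjective π) (X : Fin p → C.Obj) :
    C.pd (epsElt C R hp π hπ X) = 0 :=
  A.pd_pcomp₀_eq_zero π hπ (C.pd_tidF R _ _) fun _ => C.pd_tidF R _ _

lemma pcomp₀_tidComp (A : PTAxioms C) (R : PTRep C) {l r : ℕ} (hl : 0 < l)
    (σ : Fin r → Fin l) (hσ : Function.Surjective σ) {X : Fin r → C.Obj}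
    {W Z : Fin l → C.Obj} (fs : ∀ i, C.Hom (W i) (Z i) 0)
    (g : ∀ i, C.P (fiberCard σ i) (X ∘ fiberEmb σ i) (W i) 0) :
    C.pcomp₀ σ hσ (tidComp C R hl fs) g
      = C.pcomp₀ σ hσ (tidF R hl Z) (fun i => C.act₀ (fiberCard_pos σ hσ i) (fs i) (g i)) := by
  refine (A.pcomp₀_assoc id Function.surjective_id σ hσ _ _ g).trans
    (eq_of_heq (C.pcomp₀_heq (π₁ := id ∘ σ) (π₂ := σ) rfl rfl _ _ (fun _ => rfl)
      (fun _ => rfl) (fun _ => rfl) rfl HEq.rfl fun i => ?_))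
  show HEq _ (C.act₀ _ (fs i) (g i))
  rw [C.act₀_eq_pcomp₀]
  refine C.pcomp₀_heq (fiberCard_id i) rfl _ _ (fun _ => Subsingleton.elim _ _) (fun _ => rfl)
    (fun b => congrArg W (fiberEmb_id i b)) rfl (C.heq_pcast _ _ _) fun b => ?_
  exact ((C.heq_pcast _ _ _).trans (congr_arg_heq g (fiberEmb_id i b))).trans
    (C.heq_pcast _ _ _).symm

end Representability

section Transitivity

variable (R : PTRep C)

variable {l q r : ℕ} {π : Fin q → Fin l} (hπ : Function.Surjective π)
  {π' : Fin r → Fin q} (hπ' : Function.Surjective π') {X : Fin r → C.Obj}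

lemma htp_act₀_hcomp_isEps_isEps (A : PTAxioms C) (hl : 0 < l) (hq : 0 < q) (hr : 0 < r)
    {F1 : C.Hom (tobF R hr X)
      (tobF R hq (fun j => tobF R (fiberCard_pos π' hπ' j) (X ∘ fiberEmb π' j))) 0}
    (hF1 : IsEps C R hr π' hπ' X F1)
    {F2 : C.Hom
      (tobF R hq (fun j => tobF R (fiberCard_pos π' hπ' j) (X ∘ fiberEmb π' j)))
      (tobF R hl (fun i => tobF R (fiberCard_pos π hπ i)
        ((fun j => tobF R (fiberCard_pos π' hπ' j) (X ∘ fiberEmb π' j)) ∘ fiberEmb π i))) 0}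
    (hF2 : IsEps C R hq π hπ (fun j => tobF R (fiberCard_pos π' hπ' j) (X ∘ fiberEmb π' j)) F2) :
    C.Htp (C.act₀ hr (C.dcast (add_zero 0) (C.hcomp F2 F1)) (tidF R hr X))
      (epsElt₂ C R hl π hπ π' hπ' X) := by
  rw [C.dcast_hcomp_eq_act₀, A.act₀_act₀]
  refine A.htp_trans (A.htp_act₀_right hr hF2.1 (A.pd_act₀_eq_zero hr hF1.1 (pd_tidF R hr X))
    (A.pd_epsElt R hr π' hπ' X) hF1.2) ?_
  rw [epsElt_eq_pcomp₀, A.act₀_pcomp₀ hr hq]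
  exact A.htp_trans (A.htp_pcomp₀_left π' hπ' _ (fun _ => pd_tidF R _ _) hF2.2)
    (A.htp_of_eq (A.pcomp₀_assoc π hπ π' hπ' _ _ _))

lemma htp_act₀_hcomp_isTenMap_isEps (A : PTAxioms C) (hl : 0 < l) (hr : 0 < r)
    {F3 : C.Hom (tobF R hr X)
      (tobF R hl (fun i => tobF R (fiberCard_pos (π ∘ π') (hπ.comp hπ') i)
        (X ∘ fiberEmb (π ∘ π') i))) 0}
    (hF3 : IsEps C R hr (π ∘ π') (hπ.comp hπ') X F3)
    {F4 : ∀ i : Fin l, C.Hom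
      (tobF R (fiberCard_pos (π ∘ π') (hπ.comp hπ') i) (X ∘ fiberEmb (π ∘ π') i))
      (tobF R (fiberCard_pos π hπ i)
        (fun b => tobF R
          (fiberCard_pos (fiberMap π π' i) (fiberMap_surjective π π' hπ' i) b)
          ((X ∘ fiberEmb (π ∘ π') i) ∘ fiberEmb (fiberMap π π' i) b))) 0}
    (hF4 : ∀ i, IsEps C R (fiberCard_pos (π ∘ π') (hπ.comp hπ') i)
      (fiberMap π π' i) (fiberMap_surjective π π' hπ' i)
      (X ∘ fiberEmb (π ∘ π') i) (F4 i))
    {G : C.Hom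
      (tobF R hl (fun i => tobF R (fiberCard_pos (π ∘ π') (hπ.comp hπ') i)
        (X ∘ fiberEmb (π ∘ π') i)))
      (tobF R hl (fun i => tobF R (fiberCard_pos π hπ i)
        (fun b => tobF R
          (fiberCard_pos (fiberMap π π' i) (fiberMap_surjective π π' hπ' i) b)
          ((X ∘ fiberEmb (π ∘ π') i) ∘ fiberEmb (fiberMap π π' i) b)))) 0}
    (hG : IsTenMap C R hl F4 G)
    (hobj : tobF R hl (fun i => tobF R (fiberCard_pos π hπ i)
        (fun b => tobF R
          (fiberCard_pos (fiberMap π π' i) (fiberMap_surjective π π' hπ' i) b)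
          ((X ∘ fiberEmb (π ∘ π') i) ∘ fiberEmb (fiberMap π π' i) b)))
      = tobF R hl (fun i => tobF R (fiberCard_pos π hπ i)
        ((fun j => tobF R (fiberCard_pos π' hπ' j) (X ∘ fiberEmb π' j))
          ∘ fiberEmb π i))) :
    C.Htp (C.act₀ hr (C.ocast hobj (C.dcast (add_zero 0) (C.hcomp G F3))) (tidF R hr X))
      (epsElt₂ C R hl π hπ π' hπ' X) := by
  obtain ⟨hGc, hF4c, hGh⟩ := hG
  rw [C.act₀_ocast, C.dcast_hcomp_eq_act₀, A.act₀_act₀,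
    ← ocast_pcomp₀_epsElt_fiberMap R hπ hπ' X hl hobj]
  refine C.htp_ocast hobj (A.htp_trans (A.htp_act₀_right hr hGc
    (A.pd_act₀_eq_zero hr hF3.1 (pd_tidF R hr X)) (A.pd_epsElt R hr _ _ X) hF3.2) ?_)
  rw [epsElt_eq_pcomp₀, A.act₀_pcomp₀ hr hl]
  refine A.htp_trans (A.htp_pcomp₀_left _ _ _ (fun _ => pd_tidF R _ _) hGh) ?_
  rw [A.pcomp₀_tidComp R]
  exact A.htp_pcomp₀_slots _ _ (pd_tidF R _ _)
    (fun i => A.pd_act₀_eq_zero _ (hF4c i) (pd_tidF R _ _))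
    (fun _ => A.pd_epsElt R _ _ _ _) fun i => (hF4 i).2

end Transitivity

end PTAxioms

/-- Let `P^C` be a representable pseudo-tensor structure on
a DG category `C`.  For composable surjections of finite sets
`K →π' J →π I` (with `J_i = π⁻¹(i)`, `K_j = π'⁻¹(j)`, `K_i = (ππ')⁻¹(i)`,
`π'_i = π'|_{K_i} : K_i ↠ J_i` realized as `fiberMap π π' i`), the diagram
`ε_π ∘ ε_{π'} = (⊗_{i∈I} ε_{π'_i}) ∘ ε_{ππ'}` commutes as morphisms
`⊗_{k∈K}X_k → ⊗ᵢ(⊗_{j∈Jᵢ}(⊗_{k∈K_j}X_k))` in `H⁰C`. -/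
theorem eps_transitivity
    (C : PTData.{u, v}) (A : PTAxioms C) (R : PTRep C)
    {l q r : ℕ} (hl : 0 < l) (hq : 0 < q) (hr : 0 < r)
    (π : Fin q → Fin l) (hπ : Function.Surjective π)
    (π' : Fin r → Fin q) (hπ' : Function.Surjective π')
    (X : Fin r → C.Obj)
    -- `F1 = ε_{π'} : ⊗_K X_k → ⊗_J (⊗_{K_j} X_k)`
    (F1 : C.Hom (tobF R hr X)
      (tobF R hq (fun j => tobF R (fiberCard_pos π' hπ' j) (X ∘ fiberEmb π' j))) 0)
    (hF1 : IsEps C R hr π' hπ' X F1)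
    -- `F2 = ε_π : ⊗_J (⊗_{K_j} X) → ⊗_I (⊗_{J_i} (⊗_{K_j} X))`
    (F2 : C.Hom
      (tobF R hq (fun j => tobF R (fiberCard_pos π' hπ' j) (X ∘ fiberEmb π' j)))
      (tobF R hl (fun i => tobF R (fiberCard_pos π hπ i)
        ((fun j => tobF R (fiberCard_pos π' hπ' j) (X ∘ fiberEmb π' j))
          ∘ fiberEmb π i))) 0)
    (hF2 : IsEps C R hq π hπ
      (fun j => tobF R (fiberCard_pos π' hπ' j) (X ∘ fiberEmb π' j)) F2)
    -- `F3 = ε_{ππ'} : ⊗_K X → ⊗_I (⊗_{K_i} X)`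
    (F3 : C.Hom (tobF R hr X)
      (tobF R hl (fun i => tobF R (fiberCard_pos (π ∘ π') (hπ.comp hπ') i)
        (X ∘ fiberEmb (π ∘ π') i))) 0)
    (hF3 : IsEps C R hr (π ∘ π') (hπ.comp hπ') X F3)
    -- `F4 i = ε_{π'_i} : ⊗_{K_i} X → ⊗_{J_i} (⊗_{K_j} X)`
    (F4 : ∀ i : Fin l, C.Hom
      (tobF R (fiberCard_pos (π ∘ π') (hπ.comp hπ') i) (X ∘ fiberEmb (π ∘ π') i))
      (tobF R (fiberCard_pos π hπ i)
        (fun b => tobF R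
          (fiberCard_pos (fiberMap π π' i) (fiberMap_surjective π π' hπ' i) b)
          ((X ∘ fiberEmb (π ∘ π') i) ∘ fiberEmb (fiberMap π π' i) b))) 0)
    (hF4 : ∀ i, IsEps C R (fiberCard_pos (π ∘ π') (hπ.comp hπ') i)
      (fiberMap π π' i) (fiberMap_surjective π π' hπ' i)
      (X ∘ fiberEmb (π ∘ π') i) (F4 i))
    -- `G = ⊗_{i∈I} ε_{π'_i}`
    (G : C.Hom
      (tobF R hl (fun i => tobF R (fiberCard_pos (π ∘ π') (hπ.comp hπ') i)
        (X ∘ fiberEmb (π ∘ π') i)))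
      (tobF R hl (fun i => tobF R (fiberCard_pos π hπ i)
        (fun b => tobF R
          (fiberCard_pos (fiberMap π π' i) (fiberMap_surjective π π' hπ' i) b)
          ((X ∘ fiberEmb (π ∘ π') i) ∘ fiberEmb (fiberMap π π' i) b)))) 0)
    (hG : IsTenMap C R hl F4 G)
    -- identification of the two (canonically equal) iterated tensor objects
    (hobj : tobF R hl (fun i => tobF R (fiberCard_pos π hπ i)
        (fun b => tobF R
          (fiberCard_pos (fiberMap π π' i) (fiberMap_surjective π π' hπ' i) b)
          ((X ∘ fiberEmb (π ∘ π') i) ∘ fiberEmb (fiberMap π π' i) b)))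
      = tobF R hl (fun i => tobF R (fiberCard_pos π hπ i)
        ((fun j => tobF R (fiberCard_pos π' hπ' j) (X ∘ fiberEmb π' j))
          ∘ fiberEmb π i))) :
    C.Htp (C.dcast (add_zero 0) (C.hcomp F2 F1))
      (C.ocast hobj (C.dcast (add_zero 0) (C.hcomp G F3))) := by
  have hclosed₁ : C.pd (C.dcast (add_zero 0) (C.hcomp F2 F1)) = 0 :=
    A.pd_act₀_eq_zero Nat.one_pos hF2.1 hF1.1
  have hclosed₂ : C.pd (C.ocast hobj (C.dcast (add_zero 0) (C.hcomp G F3))) = 0 := by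
    rw [C.pd_ocast, C.dcast_hcomp_eq_act₀, A.pd_act₀_eq_zero Nat.one_pos hG.1 hF3.1,
      C.ocast_zero]
  have hleft := A.htp_act₀_hcomp_isEps_isEps R hπ hπ' hl hq hr hF1 hF2
  have hright := A.htp_act₀_hcomp_isTenMap_isEps R hπ hπ' hl hr hF3 hF4 hG hobj
  exact htp_of_htp_act₀_tidF R hr hclosed₁ hclosed₂ (A.htp_trans hleft (A.htp_symm hright))
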